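/- Fix integers n ≥ 2 and k ≥ 3, set γ_k := 1/2 − 1/k, and let B₃ > 0. Let 𝔅 be a Bryant soliton profile (in particular 𝔅(ρ) = ρ^{−2} + 𝔟₂ρ^{−4} + O(ρ^{−6}) as ρ → ∞), let β : (0,∞) → ℝ be bounded, and let ζ : (0,1) → ℝ satisfy ζ(u) = u^{−4}(1 + O(u² log(1/u))) as u ↘ 0. For positive constants A₁, A₃, A₄ define z₊^tip(r,τ) := 𝔅(A₄ r) + e^{−2γ_k τ} β(r) and z₊^int(r,τ) := A₁ e^{−2γ_k τ} u^{−2}(1 − u²)^{1+2γ_k} + A₃ e^{−4γ_k τ} ζ(u), where u := e^{−γ_k τ} r. Suppose the strict inequalities (1 + (3/8)B₃^{−2}) A₁ < A₄^{−2} < (1 + (1/2)B₃^{−2}) A₁ hold. Then there exists a constant Ĉ, depending only on n, k, B₃, 𝔅, β, ζ, such that whenever A₃ ≥ Ĉ (A₁^{1/2} + (1 + (1/2)B₃^{−2})² A₁²), there is a time τ₆ so that for all τ ≥ τ₆ one has z₊^tip ≤ z₊^int at r = B₃ √(A₃/A₁) and z₊^tip ≥ z₊^int at r = 2B₃ √(A₃/A₁).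 -/
import Mathlib


open Topology Filter Asymptotics Set

/-- `γ_k = 1/2 - 1/k`. -/
noncomputable def gam (k : ℕ) : ℝ := 1/2 - 1/(k:ℝ)

/-- The elliptic operator
`E_r[z] = z z'' - (1/2)(z')² + (n-1-z)z'/r + 2(n-1)(1-z)z/r²`. -/
noncomputable def Eop (n : ℕ) (z : ℝ → ℝ) (r : ℝ) : ℝ :=
  z r * deriv (deriv z) r - (1/2) * (deriv z r)^2
    + ((n:ℝ) - 1 - z r) * deriv z r / r
    + 2 * ((n:ℝ) - 1) * (1 - z r) * z r / r^2

/-- A Bryant soliton profile. -/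
structure BryantProfile (n : ℕ) where
  toFun : ℝ → ℝ
  b : ℝ
  b2 : ℝ
  ctilde : ℝ
  smooth : ContDiffOn ℝ (⊤ : ℕ∞) toFun (Set.Ici 0)
  mem_Ioc : ∀ r : ℝ, 0 ≤ r → toFun r ∈ Set.Ioc (0:ℝ) 1
  val_zero : toFun 0 = 1
  deriv_zero : deriv toFun 0 = 0
  deriv_neg : ∀ r : ℝ, 0 < r → deriv toFun r < 0
  soliton : ∀ r : ℝ, 0 < r → Eop n toFun r = 0
  b_pos : 0 < b
  expand_zero : (fun ρ => toFun ρ - (1 - b * ρ^2)) =O[𝓝[>] (0:ℝ)] fun ρ => ρ^4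
  expand_zero_deriv :
    (fun ρ => deriv toFun ρ + 2 * b * ρ) =O[𝓝[>] (0:ℝ)] fun ρ => ρ^3
  expand_top :
    (fun ρ => toFun ρ - (ρ ^ (-2:ℝ) + b2 * ρ ^ (-4:ℝ))) =O[atTop] fun ρ => ρ ^ (-6:ℝ)
  expand_top_deriv :
    (fun ρ => deriv toFun ρ - (-2 * ρ ^ (-3:ℝ) - 4 * b2 * ρ ^ (-5:ℝ)))
      =O[atTop] fun ρ => ρ ^ (-7:ℝ)
  ctilde_pos : 0 < ctilde
  deriv_lower : ∀ r : ℝ, 0 < r → ctilde * min (r^2) (r ^ (-2:ℝ)) ≤ -(r * deriv toFun r)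

/-- The tip-region upper barrier `z₊^tip(r,τ) = 𝔅(A₄ r) + e^{-2γ_k τ} β(r)`. -/
noncomputable def zTip (n k : ℕ) (𝔅 : BryantProfile n) (β : ℝ → ℝ) (A₄ r τ : ℝ) : ℝ :=
  𝔅.toFun (A₄ * r) + Real.exp (-2 * gam k * τ) * β r

/-- The intermediate-region upper barrier
`z₊^int(r,τ) = A₁ e^{-2γ_k τ} u⁻²(1-u²)^{1+2γ_k} + A₃ e^{-4γ_k τ} ζ(u)`, `u = e^{-γ_k τ} r`. -/
noncomputable def zInt (k : ℕ) (ζ : ℝ → ℝ) (A₁ A₃ r τ : ℝ) : ℝ :=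
  A₁ * Real.exp (-2 * gam k * τ) * (Real.exp (-gam k * τ) * r) ^ (-2:ℝ)
      * (1 - (Real.exp (-gam k * τ) * r)^2) ^ (1 + 2 * gam k)
    + A₃ * Real.exp (-4 * gam k * τ) * ζ (Real.exp (-gam k * τ) * r)

private lemma rpow_neg_two' {x : ℝ} (hx : 0 < x) : x ^ (-2:ℝ) = (x^2)⁻¹ := by
  rw [show (-2:ℝ) = -((2:ℕ):ℝ) by norm_num, Real.rpow_neg hx.le, Real.rpow_natCast]

private lemma rpow_neg_four' {x : ℝ} (hx : 0 < x) : x ^ (-4:ℝ) = (x^4)⁻¹ := by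
  rw [show (-4:ℝ) = -((4:ℕ):ℝ) by norm_num, Real.rpow_neg hx.le, Real.rpow_natCast]

private lemma rpow_neg_six' {x : ℝ} (hx : 0 < x) : x ^ (-6:ℝ) = (x^6)⁻¹ := by
  rw [show (-6:ℝ) = -((6:ℕ):ℝ) by norm_num, Real.rpow_neg hx.le, Real.rpow_natCast]

private lemma gam_pos' {k : ℕ} (hk : 3 ≤ k) : 0 < gam k := by
  have hk' : (3:ℝ) ≤ (k:ℝ) := by exact_mod_cast hk
  have h1 : (1:ℝ)/(k:ℝ) ≤ 1/3 := by
    apply div_le_div_of_nonneg_left (by norm_num) (by norm_num) hk'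
  unfold gam; linarith

private lemma tendsto_exp_neg' {c : ℝ} (hc : 0 < c) :
    Tendsto (fun τ : ℝ => Real.exp (-(c * τ))) atTop (𝓝 0) := by
  have h1 : Tendsto (fun τ : ℝ => c * τ) atTop atTop :=
    Tendsto.const_mul_atTop hc tendsto_id
  have h2 := tendsto_inv_atTop_zero.comp (Real.tendsto_exp_atTop.comp h1)
  refine h2.congr fun τ => ?_
  simp [Function.comp, Real.exp_neg]

private lemma tendsto_u' {k : ℕ} (hk : 3 ≤ k) {r : ℝ} (hr : 0 < r) :
    Tendsto (fun τ : ℝ => Real.exp (-gam k * τ) * r) atTop (𝓝[>] (0:ℝ)) := by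
  rw [tendsto_nhdsWithin_iff]
  constructor
  · have h := (tendsto_exp_neg' (gam_pos' hk)).mul_const r
    simp only [zero_mul] at h
    refine h.congr fun τ => ?_
    rw [neg_mul]
  · filter_upwards with τ
    exact mul_pos (Real.exp_pos _) hr

private lemma tendsto_pow4_zeta {ζ : ℝ → ℝ}
    (hζ : (fun u => ζ u - u ^ (-4:ℝ)) =O[𝓝[>] (0:ℝ)]
        fun u => u ^ (-2:ℝ) * Real.log (1/u)) :
    Tendsto (fun u : ℝ => u^4 * ζ u) (𝓝[>] (0:ℝ)) (𝓝 1) := by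
  have hb : Tendsto (fun u : ℝ => u^4 * (u ^ (-2:ℝ) * Real.log (1/u)))
      (𝓝[>] (0:ℝ)) (𝓝 0) := by
    have h := (tendsto_log_mul_rpow_nhdsGT_zero (show (0:ℝ) < 2 by norm_num)).neg
    rw [neg_zero] at h
    refine h.congr' ?_
    filter_upwards [self_mem_nhdsWithin] with u (hu : 0 < u)
    rw [rpow_neg_two' hu, one_div, Real.log_inv,
      show (2:ℝ) = ((2:ℕ):ℝ) by norm_num, Real.rpow_natCast]
    field_simp
  have hsmall : Tendsto (fun u : ℝ => u^4 * (ζ u - u ^ (-4:ℝ))) (𝓝[>] (0:ℝ)) (𝓝 0) :=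
    ((isBigO_refl (fun u : ℝ => u^4) _).mul hζ).trans_tendsto hb
  have h1 : Tendsto (fun u : ℝ => 1 + u^4 * (ζ u - u ^ (-4:ℝ))) (𝓝[>] (0:ℝ)) (𝓝 1) := by
    simpa using tendsto_const_nhds.add hsmall
  refine h1.congr' ?_
  filter_upwards [self_mem_nhdsWithin] with u (hu : 0 < u)
  rw [rpow_neg_four' hu]
  field_simp
  ring

private lemma tendsto_one_sub_sq_rpow' (c : ℝ) :
    Tendsto (fun u : ℝ => (1 - u^2) ^ c) (𝓝[>] (0:ℝ)) (𝓝 1) := by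
  have h1 : ContinuousAt (fun u : ℝ => (1 - u^2) ^ c) 0 := by
    apply ContinuousAt.rpow_const
    · exact (continuous_const.sub (continuous_pow 2)).continuousAt
    · left; norm_num
  have h2 := h1.tendsto
  have h2' : Tendsto (fun u : ℝ => (1 - u^2) ^ c) (𝓝 0) (𝓝 1) := by
    convert h2 using 2
    norm_num
  exact h2'.mono_left nhdsWithin_le_nhds

private lemma tendsto_zInt' {k : ℕ} (hk : 3 ≤ k) {ζ : ℝ → ℝ}
    (hζ : (fun u => ζ u - u ^ (-4:ℝ)) =O[𝓝[>] (0:ℝ)]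
        fun u => u ^ (-2:ℝ) * Real.log (1/u))
    (A₁ A₃ : ℝ) {r : ℝ} (hr : 0 < r) :
    Tendsto (fun τ => zInt k ζ A₁ A₃ r τ) atTop
      (𝓝 (A₁ * (r^2)⁻¹ + A₃ * (r^4)⁻¹)) := by
  have hu := tendsto_u' hk hr
  have hG : Tendsto (fun u : ℝ => A₁ * (r^2)⁻¹ * (1 - u^2) ^ (1 + 2*gam k)
        + A₃ * (r^4)⁻¹ * (u^4 * ζ u)) (𝓝[>] (0:ℝ))
      (𝓝 (A₁ * (r^2)⁻¹ + A₃ * (r^4)⁻¹)) := by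
    have h1 := (tendsto_one_sub_sq_rpow' (1 + 2*gam k)).const_mul (A₁ * (r^2)⁻¹)
    have h2 := (tendsto_pow4_zeta hζ).const_mul (A₃ * (r^4)⁻¹)
    have h3 := h1.add h2
    simpa using h3
  refine (hG.comp hu).congr fun τ => ?_
  set E := Real.exp (-gam k * τ) with hE
  have hE0 : 0 < E := Real.exp_pos _
  have e2 : Real.exp (-2 * gam k * τ) = E^2 := by
    rw [hE, pow_two, ← Real.exp_add]; congr 1; ring
  have e4 : Real.exp (-4 * gam k * τ) = E^4 := by
    have h : E^4 = E^2 * E^2 := by ring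
    rw [h, ← e2, ← Real.exp_add]; congr 1; ring
  simp only [Function.comp, zInt, ← hE]
  rw [e2, e4, rpow_neg_two' (mul_pos hE0 hr)]
  field_simp

private lemma tendsto_zTip' (n k : ℕ) (hk : 3 ≤ k) (𝔅 : BryantProfile n)
    (β : ℝ → ℝ) (A₄ r : ℝ) :
    Tendsto (fun τ => zTip n k 𝔅 β A₄ r τ) atTop (𝓝 (𝔅.toFun (A₄ * r))) := by
  have hc : 0 < 2 * gam k := by have := gam_pos' hk; linarith
  have h := (tendsto_exp_neg' hc).mul_const (β r)
  rw [zero_mul] at h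
  have h2 : Tendsto (fun τ : ℝ => Real.exp (-2 * gam k * τ) * β r) atTop (𝓝 0) := by
    refine h.congr fun τ => ?_
    congr 2
    ring
  have h3 := tendsto_const_nhds (x := 𝔅.toFun (A₄ * r)) (f := atTop (α := ℝ)) |>.add h2
  rw [add_zero] at h3
  exact h3.congr fun τ => by rw [zTip]

private lemma key_patch1 {A₁ A₃ b₂ C J P α : ℝ} (hA₁ : 0 < A₁) (hA₃ : 0 < A₃)
    (hC : 0 ≤ C) (hJ : 0 < J) (hPpos : 0 < P)
    (hJub : J < α * A₁)
    (h4b : 4 * |b₂| * (α^2 * A₁^2) ≤ A₃)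
    (hCC : 4 * C * (α^3 * A₁^4) ≤ A₁ * (A₃ * P))
    (he : (α - 1) * (A₁ * P) = (1/2) * A₃) :
    J * P^2 + b₂ * J^2 * P + C * J^3 < A₁ * P^2 + A₃ * P := by
  have s1 : b₂ * J^2 * P ≤ |b₂| * J^2 * P := by
    have h := le_abs_self b₂
    nlinarith [mul_nonneg (sq_nonneg J) hPpos.le]
  have hJ2 : J^2 ≤ (α*A₁)^2 := pow_le_pow_left₀ hJ.le hJub.le 2
  have hJ3 : J^3 ≤ (α*A₁)^3 := pow_le_pow_left₀ hJ.le hJub.le 3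
  have t1 : J * P^2 < (α*A₁) * P^2 := mul_lt_mul_of_pos_right hJub (by positivity)
  have t2 : |b₂| * J^2 * P ≤ |b₂| * (α*A₁)^2 * P :=
    mul_le_mul_of_nonneg_right (mul_le_mul_of_nonneg_left hJ2 (abs_nonneg b₂)) hPpos.le
  have t3 : C * J^3 ≤ C * (α*A₁)^3 := mul_le_mul_of_nonneg_left hJ3 hC
  have e1 : (α*A₁) * P^2 = A₁ * P^2 + (1/2) * (A₃ * P) := by linear_combination P * he
  have e2 : |b₂| * (α*A₁)^2 * P ≤ (1/4) * (A₃ * P) := by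
    nlinarith [mul_le_mul_of_nonneg_right h4b hPpos.le]
  have e3 : C * (α*A₁)^3 ≤ (1/4) * (A₃ * P) := by
    have h3 : 4 * (C * (α*A₁)^3) ≤ A₃ * P := by
      refine le_of_mul_le_mul_left ?_ hA₁
      calc A₁ * (4 * (C * (α*A₁)^3)) = 4 * C * (α^3 * A₁^4) := by ring
        _ ≤ A₁ * (A₃ * P) := hCC
    linarith
  linarith

private lemma key_patch2 {A₁ A₃ b₂ C J P α β' : ℝ} (hA₁ : 0 < A₁) (hA₃ : 0 < A₃)
    (hC : 0 ≤ C) (hJ : 0 < J) (hPpos : 0 < P)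
    (hJlb : β' * A₁ < J)
    (hJub : J < α * A₁)
    (h4b : 4 * |b₂| * (α^2 * A₁^2) ≤ A₃)
    (hCC : 4 * C * (α^3 * A₁^4) ≤ A₁ * (A₃ * P))
    (he : (β' - 1) * (A₁ * P) = (3/2) * A₃) :
    A₁ * P^2 + A₃ * P < J * P^2 + b₂ * J^2 * P - C * J^3 := by
  have s1 : -(|b₂| * J^2 * P) ≤ b₂ * J^2 * P := by
    have h := neg_abs_le b₂
    nlinarith [mul_nonneg (sq_nonneg J) hPpos.le]
  have hJ2 : J^2 ≤ (α*A₁)^2 := pow_le_pow_left₀ hJ.le hJub.le 2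
  have hJ3 : J^3 ≤ (α*A₁)^3 := pow_le_pow_left₀ hJ.le hJub.le 3
  have t1 : β' * A₁ * P^2 < J * P^2 := mul_lt_mul_of_pos_right hJlb (by positivity)
  have t2 : |b₂| * J^2 * P ≤ |b₂| * (α*A₁)^2 * P :=
    mul_le_mul_of_nonneg_right (mul_le_mul_of_nonneg_left hJ2 (abs_nonneg b₂)) hPpos.le
  have t3 : C * J^3 ≤ C * (α*A₁)^3 := mul_le_mul_of_nonneg_left hJ3 hC
  have e1 : β' * A₁ * P^2 = A₁ * P^2 + (3/2) * (A₃ * P) := by linear_combination P * he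
  have e2 : |b₂| * (α*A₁)^2 * P ≤ (1/4) * (A₃ * P) := by
    nlinarith [mul_le_mul_of_nonneg_right h4b hPpos.le]
  have e3 : C * (α*A₁)^3 ≤ (1/4) * (A₃ * P) := by
    have h3 : 4 * (C * (α*A₁)^3) ≤ A₃ * P := by
      refine le_of_mul_le_mul_left ?_ hA₁
      calc A₁ * (4 * (C * (α*A₁)^3)) = 4 * C * (α^3 * A₁^4) := by ring
        _ ≤ A₁ * (A₃ * P) := hCC
    linarith
  linarith

set_option maxHeartbeats 1000000 in
/-- patching of the tip and intermediate upper barriers. -/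
theorem stmt8 (n k : ℕ) (hn : 2 ≤ n) (hk : 3 ≤ k) (B₃ : ℝ) (hB₃ : 0 < B₃)
    (𝔅 : BryantProfile n) (β : ℝ → ℝ) (M : ℝ)
    (hβbdd : ∀ r : ℝ, 0 < r → |β r| ≤ M)
    (ζ : ℝ → ℝ)
    (hζ : (fun u => ζ u - u ^ (-4:ℝ)) =O[𝓝[>] (0:ℝ)]
        fun u => u ^ (-2:ℝ) * Real.log (1/u)) :
    ∃ Chat : ℝ, ∀ A₁ A₃ A₄ : ℝ, 0 < A₁ → 0 < A₃ → 0 < A₄ →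
      (1 + (3/8) / B₃^2) * A₁ < (A₄^2)⁻¹ →
      (A₄^2)⁻¹ < (1 + (1/2) / B₃^2) * A₁ →
      Chat * (A₁ ^ ((1:ℝ)/2) + (1 + (1/2) / B₃^2)^2 * A₁^2) ≤ A₃ →
      ∃ τ₆ : ℝ, ∀ τ : ℝ, τ₆ ≤ τ →
        zTip n k 𝔅 β A₄ (B₃ * Real.sqrt (A₃/A₁)) τ
            ≤ zInt k ζ A₁ A₃ (B₃ * Real.sqrt (A₃/A₁)) τ ∧
        zInt k ζ A₁ A₃ (2 * B₃ * Real.sqrt (A₃/A₁)) τ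
            ≤ zTip n k 𝔅 β A₄ (2 * B₃ * Real.sqrt (A₃/A₁)) τ := by
  obtain ⟨C₀, hC₀⟩ := Asymptotics.isBigO_iff.mp 𝔅.expand_top
  rw [eventually_atTop] at hC₀
  obtain ⟨R₀, hR₀⟩ := hC₀
  set C : ℝ := max C₀ 0 with hCdef
  set R : ℝ := max R₀ 1 with hRdef
  have hC : 0 ≤ C := le_max_right _ _
  have hR1 : (1:ℝ) ≤ R := le_max_right _ _
  have hR0 : 0 < R := lt_of_lt_of_le one_pos hR1
  have hbound : ∀ ρ : ℝ, R ≤ ρ →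
      |𝔅.toFun ρ - ((ρ^2)⁻¹ + 𝔅.b2 * (ρ^4)⁻¹)| ≤ C * (ρ^6)⁻¹ := by
    intro ρ hρ
    have hρ0 : 0 < ρ := lt_of_lt_of_le hR0 hρ
    have h := hR₀ ρ (le_trans (le_max_left _ _) hρ)
    rw [Real.norm_eq_abs, Real.norm_eq_abs, rpow_neg_two' hρ0, rpow_neg_four' hρ0,
      rpow_neg_six' hρ0, abs_of_pos (show (0:ℝ) < (ρ^6)⁻¹ by positivity)] at h
    exact h.trans (mul_le_mul_of_nonneg_right (le_max_left _ _) (by positivity))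
  clear_value C R
  refine ⟨1 + 4*|𝔅.b2| + 4*C/B₃^2 + R^2/B₃^2, ?_⟩
  intro A₁ A₃ A₄ hA₁ hA₃ hA₄ hlow hhigh hA₃C
  set Chat : ℝ := 1 + 4*|𝔅.b2| + 4*C/B₃^2 + R^2/B₃^2 with hChdef
  have hb2Ch : 4*|𝔅.b2| ≤ Chat := by
    rw [hChdef]
    have h : (0:ℝ) ≤ 1 + 4*C/B₃^2 + R^2/B₃^2 := by positivity
    linarith
  have hCCh : 4*C/B₃^2 ≤ Chat := by
    rw [hChdef]
    have h : (0:ℝ) ≤ 1 + 4*|𝔅.b2| + R^2/B₃^2 := by positivity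
    linarith
  have hRCh : R^2/B₃^2 ≤ Chat := by
    rw [hChdef]
    have h : (0:ℝ) ≤ 1 + 4*|𝔅.b2| + 4*C/B₃^2 := by positivity
    linarith
  have hCh1 : (1:ℝ) ≤ Chat := by
    rw [hChdef]
    have hrest : 0 ≤ 4*|𝔅.b2| + 4*C/B₃^2 + R^2/B₃^2 := by positivity
    linarith
  clear_value Chat
  have hCh0 : (0:ℝ) < Chat := lt_of_lt_of_le one_pos hCh1
  have hα1 : (1:ℝ) ≤ 1 + (1/2)/B₃^2 := le_add_of_nonneg_right (by positivity)
  have hα0 : (0:ℝ) < 1 + (1/2)/B₃^2 := lt_of_lt_of_le one_pos hα1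
  -- A₃ dominates Chat * α² A₁²
  have hsqrt : (0:ℝ) ≤ A₁ ^ ((1:ℝ)/2) := Real.rpow_nonneg hA₁.le _
  have hCA : Chat * ((1 + (1/2)/B₃^2)^2 * A₁^2) ≤ A₃ := by
    refine le_trans ?_ hA₃C
    nlinarith [mul_nonneg hCh0.le hsqrt]
  have h4b : 4 * |𝔅.b2| * ((1 + (1/2)/B₃^2)^2 * A₁^2) ≤ A₃ := by
    refine le_trans ?_ hCA
    exact mul_le_mul_of_nonneg_right hb2Ch (by positivity)
  have hCCkey : 4 * C * ((1 + (1/2)/B₃^2)^3 * A₁^4) ≤ B₃^2 * A₃^2 := by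
    have hA3sq : (Chat * ((1 + (1/2)/B₃^2)^2 * A₁^2))^2 ≤ A₃^2 :=
      pow_le_pow_left₀ (by positivity) hCA 2
    have sa := mul_le_mul_of_nonneg_left hA3sq (sq_nonneg B₃)
    have h3 : 4*C ≤ Chat * B₃^2 := by
      have h2 := hCCh
      rw [div_le_iff₀ (by positivity : (0:ℝ) < B₃^2)] at h2; linarith
    have sb : 4*C*(Chat*((1 + (1/2)/B₃^2)^4*A₁^4))
        ≤ (Chat*B₃^2)*(Chat*((1 + (1/2)/B₃^2)^4*A₁^4)) :=
      mul_le_mul_of_nonneg_right h3 (by positivity)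
    have hca : (1:ℝ) ≤ Chat * (1 + (1/2)/B₃^2) := by
      have h := mul_le_mul hCh1 hα1 zero_le_one hCh0.le
      linarith
    have sc' : (1:ℝ) * ((1 + (1/2)/B₃^2)^3*A₁^4)
        ≤ (Chat * (1 + (1/2)/B₃^2)) * ((1 + (1/2)/B₃^2)^3*A₁^4) :=
      mul_le_mul_of_nonneg_right hca (by positivity)
    have sc := mul_le_mul_of_nonneg_left sc' (by positivity : (0:ℝ) ≤ 4*C)
    linarith [sa, sb, sc]
  -- geometry of the two radii
  set s : ℝ := Real.sqrt (A₃/A₁) with hsdef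
  have hs0 : 0 < s := Real.sqrt_pos.2 (by positivity)
  have hs2 : A₁ * s^2 = A₃ := by
    rw [hsdef, Real.sq_sqrt (by positivity : (0:ℝ) ≤ A₃/A₁)]
    field_simp
  clear_value s
  have hr₁ : 0 < B₃ * s := mul_pos hB₃ hs0
  have hr₂ : 0 < 2 * B₃ * s := by positivity
  have hP₁ : A₁ * (B₃*s)^2 = B₃^2 * A₃ := by linear_combination B₃^2 * hs2
  have hP₂ : A₁ * (2*B₃*s)^2 = 4 * B₃^2 * A₃ := by linear_combination 4 * B₃^2 * hs2
  have he₁ : ((1 + (1/2)/B₃^2) - 1) * (A₁ * (B₃*s)^2) = (1/2) * A₃ := by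
    rw [hP₁]; field_simp; ring
  have he₂ : ((1 + (3/8)/B₃^2) - 1) * (A₁ * (2*B₃*s)^2) = (3/2) * A₃ := by
    rw [hP₂]; field_simp; ring
  have hCC₁ : 4 * C * ((1 + (1/2)/B₃^2)^3 * A₁^4) ≤ A₁ * (A₃ * (B₃*s)^2) := by
    have h : A₁ * (A₃ * (B₃*s)^2) = B₃^2 * A₃^2 := by linear_combination A₃ * hP₁
    rw [h]; exact hCCkey
  have hCC₂ : 4 * C * ((1 + (1/2)/B₃^2)^3 * A₁^4) ≤ A₁ * (A₃ * (2*B₃*s)^2) := by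
    have h : A₁ * (A₃ * (2*B₃*s)^2) = 4 * B₃^2 * A₃^2 := by linear_combination A₃ * hP₂
    rw [h]
    nlinarith [mul_nonneg (sq_nonneg B₃) (sq_nonneg A₃)]
  -- J := (A₄²)⁻¹
  have hJ0 : 0 < (A₄^2)⁻¹ := by positivity
  -- the radii are large enough for the asymptotic bound
  have hρ₁ : R ≤ A₄ * (B₃*s) := by
    have k1 : R^2 ≤ Chat * B₃^2 := by
      have hRB := hRCh
      rw [div_le_iff₀ (by positivity : (0:ℝ) < B₃^2)] at hRB; linarith
    have h1 : (1:ℝ) < (1 + (1/2)/B₃^2) * A₁ * A₄^2 := by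
      have h := mul_lt_mul_of_pos_right hhigh (pow_pos hA₄ 2)
      rwa [inv_mul_cancel₀ (ne_of_gt (pow_pos hA₄ 2))] at h
    have k3 : Chat * A₁ ≤ A₄^2 * A₃ := by
      have c1 := mul_lt_mul_of_pos_left h1 (mul_pos hCh0 hA₁)
      have c4 := mul_le_mul_of_nonneg_right hCA (sq_nonneg A₄)
      nlinarith [mul_nonneg (mul_nonneg (mul_nonneg hCh0.le hA₁.le)
        (mul_nonneg (mul_nonneg hα0.le hA₁.le) (sq_nonneg A₄))) (sub_nonneg.2 hα1)]
    have ksq : R^2 ≤ (A₄ * (B₃*s))^2 := by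
      refine le_of_mul_le_mul_left ?_ hA₁
      have hx : A₁ * (A₄ * (B₃*s))^2 = A₄^2 * (B₃^2 * A₃) := by
        linear_combination A₄^2 * hP₁
      calc A₁ * R^2 ≤ A₁ * (Chat * B₃^2) := mul_le_mul_of_nonneg_left k1 hA₁.le
        _ ≤ A₁ * (A₄ * (B₃*s))^2 := by
            rw [hx]
            have h5 := mul_le_mul_of_nonneg_right k3 (sq_nonneg B₃)
            linarith
    exact le_of_pow_le_pow_left₀ (by norm_num) (by positivity) ksq
  have hρ₂ : R ≤ A₄ * (2*B₃*s) := by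
    refine hρ₁.trans ?_
    have h6 := mul_pos (mul_pos hA₄ hB₃) hs0
    nlinarith [h6]
  -- strict inequalities between the limits
  have target1 : 𝔅.toFun (A₄ * (B₃*s)) < A₁ * ((B₃*s)^2)⁻¹ + A₃ * ((B₃*s)^4)⁻¹ := by
    have hb₁ := hbound (A₄ * (B₃*s)) hρ₁
    have hub := (abs_le.mp hb₁).2
    have key := key_patch1 (b₂ := 𝔅.b2) hA₁ hA₃ hC hJ0
      (show (0:ℝ) < (B₃*s)^2 by positivity) hhigh h4b hCC₁ he₁
    have hrw1 : ((A₄*(B₃*s))^2)⁻¹ + 𝔅.b2 * ((A₄*(B₃*s))^4)⁻¹ + C * ((A₄*(B₃*s))^6)⁻¹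
        = ((A₄^2)⁻¹ * ((B₃*s)^2)^2 + 𝔅.b2 * ((A₄^2)⁻¹)^2 * ((B₃*s)^2)
            + C * ((A₄^2)⁻¹)^3) / ((B₃*s)^2)^3 := by
      field_simp
    have hrw2 : A₁ * ((B₃*s)^2)⁻¹ + A₃ * ((B₃*s)^4)⁻¹
        = (A₁ * ((B₃*s)^2)^2 + A₃ * ((B₃*s)^2)) / ((B₃*s)^2)^3 := by
      field_simp
    calc 𝔅.toFun (A₄ * (B₃*s))
        ≤ ((A₄*(B₃*s))^2)⁻¹ + 𝔅.b2 * ((A₄*(B₃*s))^4)⁻¹ + C * ((A₄*(B₃*s))^6)⁻¹ := by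
          linarith
      _ = ((A₄^2)⁻¹ * ((B₃*s)^2)^2 + 𝔅.b2 * ((A₄^2)⁻¹)^2 * ((B₃*s)^2)
            + C * ((A₄^2)⁻¹)^3) / ((B₃*s)^2)^3 := hrw1
      _ < (A₁ * ((B₃*s)^2)^2 + A₃ * ((B₃*s)^2)) / ((B₃*s)^2)^3 := by
          exact (div_lt_div_iff_of_pos_right (by positivity)).mpr key
      _ = A₁ * ((B₃*s)^2)⁻¹ + A₃ * ((B₃*s)^4)⁻¹ := hrw2.symm
  have target2 : A₁ * ((2*B₃*s)^2)⁻¹ + A₃ * ((2*B₃*s)^4)⁻¹ < 𝔅.toFun (A₄ * (2*B₃*s)) := by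
    have hb₂ := hbound (A₄ * (2*B₃*s)) hρ₂
    have hlb := (abs_le.mp hb₂).1
    have key := key_patch2 (b₂ := 𝔅.b2) hA₁ hA₃ hC hJ0
      (show (0:ℝ) < (2*B₃*s)^2 by positivity) hlow hhigh h4b hCC₂ he₂
    have hrw1 : ((A₄*(2*B₃*s))^2)⁻¹ + 𝔅.b2 * ((A₄*(2*B₃*s))^4)⁻¹ - C * ((A₄*(2*B₃*s))^6)⁻¹
        = ((A₄^2)⁻¹ * ((2*B₃*s)^2)^2 + 𝔅.b2 * ((A₄^2)⁻¹)^2 * ((2*B₃*s)^2)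
            - C * ((A₄^2)⁻¹)^3) / ((2*B₃*s)^2)^3 := by
      field_simp
    have hrw2 : A₁ * ((2*B₃*s)^2)⁻¹ + A₃ * ((2*B₃*s)^4)⁻¹
        = (A₁ * ((2*B₃*s)^2)^2 + A₃ * ((2*B₃*s)^2)) / ((2*B₃*s)^2)^3 := by
      field_simp
    calc A₁ * ((2*B₃*s)^2)⁻¹ + A₃ * ((2*B₃*s)^4)⁻¹
        = (A₁ * ((2*B₃*s)^2)^2 + A₃ * ((2*B₃*s)^2)) / ((2*B₃*s)^2)^3 := hrw2
      _ < ((A₄^2)⁻¹ * ((2*B₃*s)^2)^2 + 𝔅.b2 * ((A₄^2)⁻¹)^2 * ((2*B₃*s)^2)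
            - C * ((A₄^2)⁻¹)^3) / ((2*B₃*s)^2)^3 := by
          exact (div_lt_div_iff_of_pos_right (by positivity)).mpr key
      _ = ((A₄*(2*B₃*s))^2)⁻¹ + 𝔅.b2 * ((A₄*(2*B₃*s))^4)⁻¹ - C * ((A₄*(2*B₃*s))^6)⁻¹ :=
          hrw1.symm
      _ ≤ 𝔅.toFun (A₄ * (2*B₃*s)) := by linarith
  -- limits and eventual comparison
  have hzi1 := tendsto_zInt' hk hζ A₁ A₃ hr₁
  have hzt1 := tendsto_zTip' n k hk 𝔅 β A₄ (B₃*s)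
  have hzi2 := tendsto_zInt' hk hζ A₁ A₃ hr₂
  have hzt2 := tendsto_zTip' n k hk 𝔅 β A₄ (2*B₃*s)
  have hev1 : ∀ᶠ τ in atTop, zTip n k 𝔅 β A₄ (B₃*s) τ ≤ zInt k ζ A₁ A₃ (B₃*s) τ := by
    have hsub := hzi1.sub hzt1
    have hpos : (0:ℝ) < (A₁ * ((B₃*s)^2)⁻¹ + A₃ * ((B₃*s)^4)⁻¹) - 𝔅.toFun (A₄ * (B₃*s)) :=
      by linarith
    exact (hsub.eventually_const_lt hpos).mono fun τ h => by linarith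
  have hev2 : ∀ᶠ τ in atTop,
      zInt k ζ A₁ A₃ (2*B₃*s) τ ≤ zTip n k 𝔅 β A₄ (2*B₃*s) τ := by
    have hsub := hzt2.sub hzi2
    have hpos : (0:ℝ) < 𝔅.toFun (A₄ * (2*B₃*s))
        - (A₁ * ((2*B₃*s)^2)⁻¹ + A₃ * ((2*B₃*s)^4)⁻¹) := by linarith
    exact (hsub.eventually_const_lt hpos).mono fun τ h => by linarith
  obtain ⟨τ₆, hτ⟩ := eventually_atTop.mp (hev1.and hev2)
  exact ⟨τ₆, fun τ h => hτ τ h⟩
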